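/- Let Q ∈ ℂ^{M×M} be a Hermitian matrix and H̄ ∈ ℂ^{M×J}. Suppose (i) the block matrix [[Q, H̄],[H̄^H, I_J]] is positive semidefinite, and (ii) for each m = 1,...,M-1 the sum over n = 1,...,M-m of Q_{n,n+m} equals 0, while the diagonal sum of Q equals 1. Then for every real f ∈ [-1/2, 1/2], ‖H̄^H a(f)‖₂ ≤ 1, where a(f) ∈ ℂ^M has entries a(f)_n = exp(-2πi(n-1)f). -/

import Mathlib

open Matrix Finset
open scoped ComplexOrder

/-- Steering vector: `a(f)_n = exp(-2πi n f)` for `n = 0,…,M-1`. -/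
noncomputable def steer (M : ℕ) (f : ℝ) : Fin M → ℂ :=
  fun n => Complex.exp (-2 * Real.pi * Complex.I * ((n : ℕ) : ℂ) * (f : ℂ))

/-- Sum of the `m`-th superdiagonal of `Q`. -/
noncomputable def superdiagSum {M : ℕ} (Q : Matrix (Fin M) (Fin M) ℂ) (m : ℕ) : ℂ :=
  ∑ i : Fin M, ∑ j : Fin M, if (j : ℕ) = (i : ℕ) + m then Q i j else 0

/-!
Since `|a(f)_n| = 1`, the Hermitian form `a(f)ᴴ Q a(f)` splits along the diagonals of `Q`: the
`m`-th superdiagonal contributes `(∑ₙ Q_{n,n+m}) e^{-2πimf}` and, `Q` being Hermitian, the `m`-th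
subdiagonal contributes its conjugate. The trace and superdiagonal constraints therefore force
`a(f)ᴴ Q a(f) = 1` for every `f`. On the other hand the Schur complement of the identity block of
the positive semidefinite block matrix is `Q - H̄ H̄ᴴ ⪰ 0`, so `‖H̄ᴴ a(f)‖² ≤ a(f)ᴴ Q a(f) = 1`.
-/

lemma sum_ite_eq_add {α : Type*} [AddCommMonoid α] (s : Finset ℕ) (i j : ℕ) (a : α) :
    ∑ m ∈ s, (if j = i + m then a else 0) = if i ≤ j ∧ j - i ∈ s then a else 0 := by
  have h : ∀ m, j = i + m ↔ i ≤ j ∧ m = j - i := fun m => by omega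
  simp only [h, ite_and, Finset.sum_ite_irrel, Finset.sum_ite_eq', Finset.sum_const_zero]

lemma sum_entries_eq_sum_superdiagSum {M : ℕ} (A : Matrix (Fin M) (Fin M) ℂ) :
    ∑ i, ∑ j, A i j =
      ∑ m ∈ range M, superdiagSum A m + ∑ m ∈ Ico 1 M, superdiagSum Aᵀ m := by
  have hentry : ∀ i j : Fin M, A i j = ∑ m ∈ range M, (if (j : ℕ) = i + m then A i j else 0)
      + ∑ m ∈ Ico 1 M, (if (i : ℕ) = j + m then A i j else 0) := by
    intro i j
    rw [sum_ite_eq_add, sum_ite_eq_add]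
    simp only [mem_range, mem_Ico]
    split_ifs <;> first | (exfalso; omega) | simp
  rw [Finset.sum_congr rfl fun i _ => Finset.sum_congr rfl fun j _ => hentry i j]
  simp only [Finset.sum_add_distrib, superdiagSum, transpose_apply]
  congr 1
  · exact (Finset.sum_congr rfl fun _ _ => Finset.sum_comm).trans Finset.sum_comm
  · exact Finset.sum_comm.trans
      ((Finset.sum_congr rfl fun _ _ => Finset.sum_comm).trans Finset.sum_comm)

lemma superdiagSum_transpose_of_isHermitian {M : ℕ} {A : Matrix (Fin M) (Fin M) ℂ}
    (hA : A.IsHermitian) (m : ℕ) : superdiagSum Aᵀ m = star (superdiagSum A m) := by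
  simp only [superdiagSum, transpose_apply, star_sum, apply_ite star, star_zero, hA.apply]

lemma star_dotProduct_mulVec_eq_sum {n R : Type*} [Fintype n] [DecidableEq n] [CommRing R]
    [StarRing R] (A : Matrix n n R) (v : n → R) :
    star v ⬝ᵥ A *ᵥ v = ∑ i, ∑ j, ((diagonal v)ᴴ * A * diagonal v) i j := by
  simp only [dotProduct, mulVec, Finset.mul_sum, diagonal_conjTranspose, mul_diagonal,
    diagonal_mul, Pi.star_apply, mul_assoc]

lemma superdiagSum_conjTranspose_diagonal_mul_mul_diagonal {M : ℕ}
    (A : Matrix (Fin M) (Fin M) ℂ) (v : Fin M → ℂ) (m : ℕ) (c : ℂ)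
    (hv : ∀ i j : Fin M, (j : ℕ) = i + m → star (v i) * v j = c) :
    superdiagSum ((diagonal v)ᴴ * A * diagonal v) m = superdiagSum A m * c := by
  simp only [superdiagSum, Finset.sum_mul, ite_mul, zero_mul]
  refine Finset.sum_congr rfl fun i _ => Finset.sum_congr rfl fun j _ => ?_
  split_ifs with h
  · simp only [diagonal_conjTranspose, mul_diagonal, diagonal_mul, Pi.star_apply, ← hv i j h]
    ring
  · rfl

lemma star_steer_mul_steer {M m : ℕ} (f : ℝ) (i j : Fin M) (h : (j : ℕ) = i + m) :
    star (steer M f i) * steer M f j = Complex.exp (-2 * Real.pi * Complex.I * m * f) := by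
  simp only [steer, Complex.star_def, ← Complex.exp_conj, ← Complex.exp_add, map_mul, map_neg,
    map_ofNat, Complex.conj_ofReal, Complex.conj_I, Complex.conj_natCast, h]
  push_cast
  ring_nf

lemma star_steer_dotProduct_mulVec_steer {M : ℕ} {Q : Matrix (Fin M) (Fin M) ℂ}
    (hQ : Q.IsHermitian) (hdiag : superdiagSum Q 0 = 1)
    (hsuper : ∀ m : ℕ, 1 ≤ m → m ≤ M - 1 → superdiagSum Q m = 0) (f : ℝ) :
    star (steer M f) ⬝ᵥ Q *ᵥ steer M f = 1 := by
  set P := (diagonal (steer M f))ᴴ * Q * diagonal (steer M f)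
  have hP : ∀ m : ℕ,
      superdiagSum P m = superdiagSum Q m * Complex.exp (-2 * Real.pi * Complex.I * m * f) :=
    fun m => superdiagSum_conjTranspose_diagonal_mul_mul_diagonal Q _ m _
      fun i j => star_steer_mul_steer f i j
  have hzero : ∀ m ∈ Ico 1 M, superdiagSum P m = 0 := fun m hm => by
    rw [mem_Ico] at hm
    rw [hP, hsuper m hm.1 (by omega), zero_mul]
  have hP_herm : P.IsHermitian := isHermitian_conjTranspose_mul_mul _ hQ
  rw [star_dotProduct_mulVec_eq_sum, sum_entries_eq_sum_superdiagSum,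
    Finset.sum_eq_zero (s := Ico 1 M) fun m hm => by
      rw [superdiagSum_transpose_of_isHermitian hP_herm, hzero m hm, star_zero],
    add_zero, Finset.sum_eq_single 0]
  · rw [hP, hdiag]
    simp
  · intro m hm hm0
    exact hzero m (by simp at hm ⊢; omega)
  · intro h
    obtain rfl : M = 0 := by simpa using h
    simp [superdiagSum]

lemma sum_norm_conjTranspose_mulVec_sq_le {m n : Type*} [Fintype m] [Fintype n]
    [DecidableEq n] {A : Matrix m m ℂ} {B : Matrix m n ℂ} (h : (fromBlocks A B Bᴴ 1).PosSemidef)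
    (v : m → ℂ) :
    ∑ j, ‖(Bᴴ *ᵥ v) j‖ ^ 2 ≤ (star v ⬝ᵥ A *ᵥ v).re := by
  have hschur : (A - B * Bᴴ).PosSemidef := by
    let : Invertible (1 : Matrix n n ℂ) := invertibleOne
    simpa using (PosDef.fromBlocks₂₂ A B PosDef.one).mp h
  have hnorm : star v ⬝ᵥ (B * Bᴴ) *ᵥ v = ∑ j, ((‖(Bᴴ *ᵥ v) j‖ ^ 2 : ℝ) : ℂ) := by
    have hstar : star v ᵥ* B = star (Bᴴ *ᵥ v) := by rw [mulVec_conjTranspose, star_star]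
    rw [← mulVec_mulVec, dotProduct_mulVec, hstar]
    simp only [dotProduct, Pi.star_apply, Complex.star_def, Complex.conj_mul',
      Complex.ofReal_pow]
  have := hschur.dotProduct_mulVec_nonneg v
  rw [sub_mulVec, dotProduct_sub, hnorm, sub_nonneg] at this
  simpa [← Complex.ofReal_pow] using Complex.re_le_re this

theorem stmt3_general {M J : ℕ} (Q : Matrix (Fin M) (Fin M) ℂ)
    (Hbar : Matrix (Fin M) (Fin J) ℂ) (hQ : Q.IsHermitian)
    (hblock : (Matrix.fromBlocks Q Hbar Hbarᴴ (1 : Matrix (Fin J) (Fin J) ℂ)).PosSemidef)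
    (hdiag : superdiagSum Q 0 = 1)
    (hsuper : ∀ m : ℕ, 1 ≤ m → m ≤ M - 1 → superdiagSum Q m = 0) :
    ∀ f ∈ Set.Icc (-(1:ℝ)/2) (1/2),
      Real.sqrt (∑ j : Fin J, ‖Hbarᴴ.mulVec (steer M f) j‖ ^ 2) ≤ 1 := by
  intro f _
  rw [Real.sqrt_le_one]
  calc ∑ j, ‖(Hbarᴴ *ᵥ steer M f) j‖ ^ 2
      ≤ (star (steer M f) ⬝ᵥ Q *ᵥ steer M f).re :=
        sum_norm_conjTranspose_mulVec_sq_le hblock _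
    _ = 1 := by rw [star_steer_dotProduct_mulVec_steer hQ hdiag hsuper, Complex.one_re]

/-- Proposition 1 of the paper (forward direction). -/
theorem stmt3 {M J : ℕ} (hM : 0 < M) (Q : Matrix (Fin M) (Fin M) ℂ)
    (Hbar : Matrix (Fin M) (Fin J) ℂ) (hQ : Q.IsHermitian)
    (hblock : (Matrix.fromBlocks Q Hbar Hbarᴴ (1 : Matrix (Fin J) (Fin J) ℂ)).PosSemidef)
    (hdiag : superdiagSum Q 0 = 1)
    (hsuper : ∀ m : ℕ, 1 ≤ m → m ≤ M - 1 → superdiagSum Q m = 0) :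
    ∀ f ∈ Set.Icc (-(1:ℝ)/2) (1/2),
      Real.sqrt (∑ j : Fin J, ‖Hbarᴴ.mulVec (steer M f) j‖ ^ 2) ≤ 1 :=
  stmt3_general Q Hbar hQ hblock hdiag hsuper
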